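/- Let V be a real vector space, c ∈ ℝ, n ≥ 1, q : V × V → ℝ a symmetric bilinear form, and T : V^{2n} → ℝ a symmetric 2n-multilinear form such that T(α, α, …, α) = c · q(α,α)^n for all α ∈ V. Then for every L ∈ V with q(L,L) = 0 and every β ∈ V, the evaluation of T on n+1 copies of L and n−1 copies of β is zero. -/

import Mathlib

/-!
Put `α = x • L + β` in the Fujiki relation. By multilinearity and symmetry the left side is the
polynomial `∑ₖ C(2n, k) T(L, …, L, β, …, β) xᵏ` (with `k` copies of `L`), while the right side
`c (2x q(L, β) + q(β, β))ⁿ` has degree at most `n` because `q(L, L) = 0`. Comparing coefficients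
of `x^(n+1)`, and `C(2n, n+1) ≠ 0` as `n ≥ 1`, gives the claim.
-/

open Finset Polynomial

namespace MultilinearMap

variable {R M N ι : Type*} [CommSemiring R] [AddCommMonoid M] [Module R M]
  [AddCommMonoid N] [Module R N] [DecidableEq ι]

theorem map_piecewise_const_eq_of_card_eq {f : MultilinearMap R (fun _ : ι => M) N}
    (hf : ∀ (v : ι → M) (σ : Equiv.Perm ι), f (v ∘ σ) = f v) (a b : M) {s t : Finset ι}
    (h : #s = #t) :
    f (s.piecewise (fun _ => a) (fun _ => b)) = f (t.piecewise (fun _ => a) (fun _ => b)) := by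
  obtain ⟨σ, rfl⟩ := Equiv.Perm.exists_map_finset_eq s t h
  rw [← hf ((s.map σ.toEmbedding).piecewise _ _) σ]
  congr 1
  ext i
  simp [Finset.piecewise]

theorem map_smul_add_eq_sum_piecewise [Fintype ι] (f : MultilinearMap R (fun _ : ι => M) N)
    (a b : M) (x : R) :
    f (fun _ => x • a + b) =
      ∑ s : Finset ι, x ^ #s • f (s.piecewise (fun _ => a) (fun _ => b)) := by
  rw [show (fun _ : ι => x • a + b) = (fun _ => x • a) + fun _ => b from rfl, map_add_univ]
  refine sum_congr rfl fun s _ => ?_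
  rw [← prod_const, ← map_piecewise_smul]
  congr 1
  ext i
  by_cases hi : i ∈ s <;> simp [hi]

theorem map_smul_add_eq_sum_choose {m : ℕ}
    {f : MultilinearMap R (fun _ : Fin m => M) N}
    (hf : ∀ (v : Fin m → M) (σ : Equiv.Perm (Fin m)), f (v ∘ σ) = f v) (a b : M) (x : R) :
    f (fun _ => x • a + b) = ∑ k ∈ Finset.range (m + 1),
      ((m.choose k : R) * x ^ k) • f (fun i => if (i : ℕ) < k then a else b) := by
  have piecewise_eq_initial (s : Finset (Fin m)) :
      f (s.piecewise (fun _ => a) (fun _ => b)) =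
        f (fun i => if (i : ℕ) < #s then a else b) := by
    rw [map_piecewise_const_eq_of_card_eq hf a b (t := {i | (i : ℕ) < #s})]
    · congr 1
      ext i
      simp [Finset.piecewise]
    · rw [Fin.card_filter_val_lt, min_eq_right ((card_le_univ s).trans_eq (Fintype.card_fin m))]
  simp only [map_smul_add_eq_sum_piecewise, piecewise_eq_initial]
  rw [← powerset_univ,
    sum_powerset_apply_card (fun k => x ^ k • f fun i => if (i : ℕ) < k then a else b)]
  simp [mul_smul, Nat.cast_smul_eq_nsmul]

end MultilinearMap

theorem Polynomial.eq_zero_of_forall_sum_eq_eval_of_natDegree_lt {K : Type*} [CommRing K]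
    [IsDomain K] [Infinite K] {N j : ℕ} (c : ℕ → K) (p : K[X]) (hp : p.natDegree < j)
    (hj : j ≤ N) (h : ∀ x, ∑ k ∈ range (N + 1), c k * x ^ k = p.eval x) : c j = 0 := by
  have hpoly : ∑ k ∈ range (N + 1), C (c k) * X ^ k = p :=
    Polynomial.funext fun x => by simp [eval_finsetSum, h]
  have := congrArg (coeff · j) hpoly
  simp only [finsetSum_coeff, coeff_C_mul_X_pow] at this
  rwa [sum_ite_eq, if_pos (mem_range.2 (Nat.lt_succ_of_le hj)),
    coeff_eq_zero_of_natDegree_lt hp] at this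

/-- abstract Fujiki relation: if a symmetric 2n-multilinear form
T satisfies T(α,…,α) = c·q(α,α)ⁿ, then T evaluated on n+1 copies of an
isotropic vector L and n−1 copies of any β vanishes. -/
theorem stmt_12 {V : Type*} [AddCommGroup V] [Module ℝ V]
    (c : ℝ) (n : ℕ) (hn : 1 ≤ n)
    (q : V →ₗ[ℝ] V →ₗ[ℝ] ℝ) (hq : ∀ x y : V, q x y = q y x)
    (T : MultilinearMap ℝ (fun _ : Fin (2 * n) => V) ℝ)
    (hTsymm : ∀ (v : Fin (2 * n) → V) (σ : Equiv.Perm (Fin (2 * n))),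
      T (v ∘ σ) = T v)
    (hfujiki : ∀ α : V, T (fun _ => α) = c * (q α α) ^ n)
    (L : V) (hL : q L L = 0) (β : V) :
    T (fun i => if (i : ℕ) < n + 1 then L else β) = 0 := by
  have hq_line (x : ℝ) :
      q (x • L + β) (x • L + β) = (C (2 * q L β) * X + C (q β β)).eval x := by
    simp only [map_add, map_smul, LinearMap.add_apply, LinearMap.smul_apply, smul_eq_mul,
      hL, hq β L, eval_add, eval_mul, eval_C, eval_X]
    ring
  have hdeg : (C c * (C (2 * q L β) * X + C (q β β)) ^ n).natDegree < n + 1 :=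
    calc _ ≤ ((C (2 * q L β) * X + C (q β β)) ^ n).natDegree := natDegree_C_mul_le _ _
      _ ≤ n * (C (2 * q L β) * X + C (q β β)).natDegree := natDegree_pow_le
      _ ≤ n * 1 := Nat.mul_le_mul_left n natDegree_linear_le
      _ < n + 1 := by omega
  have hcoeff := Polynomial.eq_zero_of_forall_sum_eq_eval_of_natDegree_lt (N := 2 * n)
    (fun k => ((2 * n).choose k : ℝ) * T (fun i => if (i : ℕ) < k then L else β))
    _ hdeg (by omega) fun x => by
      rw [eval_mul, eval_C, eval_pow, ← hq_line, ← hfujiki,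
        MultilinearMap.map_smul_add_eq_sum_choose hTsymm]
      simp only [smul_eq_mul]
      exact sum_congr rfl fun k _ => by ring
  exact (mul_eq_zero.1 hcoeff).resolve_left (Nat.cast_ne_zero.2 (Nat.choose_pos (by omega)).ne')
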